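/- arXiv:2312.16377 — 5 statements merged into one kernel-verified Lean document; each statement's English description precedes it below -/
import Mathlib

section
/- Let V and S be independent nonnegative random variables, and let θ > 0 be such that E[e^{θV}] < ∞. Then E[e^{θ·(V−S)⁺}] ≤ E[e^{θV}]·E[e^{−θS}] + 1 − E[e^{−θS}], where (x)⁺ = max(x, 0). -/
/-!
Since `e^{θ(v−s)⁺} = max (e^{θv} e^{−θs}) 1` and both `e^{−θs} ≤ 1 ≤ e^{θv}` hold for nonnegative
`v, s`, the pointwise bound `e^{θ(v−s)⁺} ≤ e^{θv} e^{−θs} + 1 − e^{−θs}` holds. Taking expectations,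
independence factorises the expectation of the product term.
-/

open MeasureTheory ProbabilityTheory

lemma Real.exp_mul_max_sub_zero_le {θ v s : ℝ} (hθ : 0 ≤ θ) (hv : 0 ≤ v) (hs : 0 ≤ s) :
    Real.exp (θ * max (v - s) 0) ≤
      Real.exp (θ * v) * Real.exp (-θ * s) + 1 - Real.exp (-θ * s) := by
  have hexp_neg_le_one : Real.exp (-θ * s) ≤ 1 := Real.exp_le_one_iff.2 (by nlinarith)
  rcases le_total s v with hsv | hvs
  · rw [max_eq_left (sub_nonneg.2 hsv), ← Real.exp_add, mul_sub, sub_eq_add_neg, ← neg_mul]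
    linarith
  · have hone_le_exp : 1 ≤ Real.exp (θ * v) := Real.one_le_exp (mul_nonneg hθ hv)
    rw [max_eq_right (sub_nonpos.2 hvs), mul_zero, Real.exp_zero]
    nlinarith [Real.exp_pos (-θ * s)]

lemma integrable_exp_neg_mul {Ω : Type*} [MeasurableSpace Ω] {μ : Measure Ω} [IsFiniteMeasure μ]
    {S : Ω → ℝ} (hS : AEMeasurable S μ) (hS_nonneg : ∀ ω, 0 ≤ S ω) {θ : ℝ} (hθ : 0 ≤ θ) :
    Integrable (fun ω => Real.exp (-θ * S ω)) μ :=
  (integrable_const 1).mono' (by fun_prop) <| ae_of_all _ fun ω => by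
    rw [Real.norm_of_nonneg (Real.exp_nonneg _)]
    exact Real.exp_le_one_iff.2 (by nlinarith [hS_nonneg ω])

/-- Exponential-moment estimate for `(V − S)⁺` with `V, S` independent and nonnegative:
`E[e^{θ(V−S)⁺}] ≤ E[e^{θV}]·E[e^{−θS}] + 1 − E[e^{−θS}]`. -/
theorem stmt5
    {Ω : Type*} [MeasurableSpace Ω] (μ : Measure Ω) [IsProbabilityMeasure μ]
    (V S : Ω → ℝ) (hV_meas : Measurable V) (hS_meas : Measurable S)
    (hV_nonneg : ∀ ω, 0 ≤ V ω) (hS_nonneg : ∀ ω, 0 ≤ S ω)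
    (hindep : IndepFun V S μ)
    (θ : ℝ) (hθ : 0 < θ)
    (hexp : Integrable (fun ω => Real.exp (θ * V ω)) μ) :
    ∫ ω, Real.exp (θ * max (V ω - S ω) 0) ∂μ ≤
      (∫ ω, Real.exp (θ * V ω) ∂μ) * (∫ ω, Real.exp (-θ * S ω) ∂μ)
        + 1 - ∫ ω, Real.exp (-θ * S ω) ∂μ := by
  have hexp_S := integrable_exp_neg_mul (μ := μ) hS_meas.aemeasurable hS_nonneg hθ.le
  have hindep_exp : IndepFun (fun ω => Real.exp (θ * V ω)) (fun ω => Real.exp (-θ * S ω)) μ :=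
    hindep.comp (φ := fun v => Real.exp (θ * v)) (ψ := fun s => Real.exp (-θ * s))
      (by fun_prop) (by fun_prop)
  have hprod_int : Integrable (fun ω => Real.exp (θ * V ω) * Real.exp (-θ * S ω)) μ :=
    hindep_exp.integrable_mul hexp hexp_S
  have hprod_add_one_int :
      Integrable (fun ω => Real.exp (θ * V ω) * Real.exp (-θ * S ω) + 1) μ :=
    hprod_int.add (integrable_const 1)
  have hbound_int : Integrable
      (fun ω => Real.exp (θ * V ω) * Real.exp (-θ * S ω) + 1 - Real.exp (-θ * S ω)) μ :=
    hprod_add_one_int.sub hexp_S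
  have hbound ω := Real.exp_mul_max_sub_zero_le hθ.le (hV_nonneg ω) (hS_nonneg ω)
  have hlhs_int : Integrable (fun ω => Real.exp (θ * max (V ω - S ω) 0)) μ :=
    hbound_int.mono' (by fun_prop) <| ae_of_all _ fun ω => by
      rw [Real.norm_of_nonneg (Real.exp_nonneg _)]
      exact hbound ω
  calc ∫ ω, Real.exp (θ * max (V ω - S ω) 0) ∂μ
      ≤ ∫ ω, Real.exp (θ * V ω) * Real.exp (-θ * S ω) + 1 - Real.exp (-θ * S ω) ∂μ :=
        integral_mono hlhs_int hbound_int hbound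
    _ = _ := by
      rw [integral_sub hprod_add_one_int hexp_S,
        integral_add hprod_int (integrable_const 1),
        hindep_exp.integral_fun_mul_eq_mul_integral hexp.1 hexp_S.1]
      simp
end

section
/- Let n ≥ 2 be an integer, λ > 0, θ > 0, and let V and S be independent nonnegative random variables with E[S] > 0 and E[e^{θV}] < ∞. Define ρ = λ·E[S] and S̃ₑ(θ) = (1 − E[e^{−θS}])/(θ·E[S]) (the Laplace transform of the equilibrium distribution of S). Suppose (θ/n)·E[e^{θV}] + λ·(E[e^{θ·(V−S)⁺}] − E[e^{θV}]) ≥ 0 and ρ·S̃ₑ(θ) > 1/n. Then E[e^{θV}] ≤ n·ρ·S̃ₑ(θ)/(n·ρ·S̃ₑ(θ) − 1), and consequently for every x ≥ 0, P(V ≥ x) ≤ (n·ρ·S̃ₑ(θ)/(n·ρ·S̃ₑ(θ) − 1))·e^{−θx}. -/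
/-!
Write `M = E[e^{θV}]` and `q = 1 - E[e^{-θS}]`. Pointwise,
`(e^{θV} - 1)(1 - e^{-θS}) ≤ e^{θV} - e^{θ(V-S)⁺}`, so by independence
`(M - 1) q ≤ M - E[e^{θ(V-S)⁺}]`. Feeding this into the rate-conservation inequality gives
`λ q (M - 1) ≤ (θ/n) M`, i.e. `A (M - 1) ≤ M` with `A = nλq/θ = nρS̃ₑ(θ) > 1`, whence
`M ≤ A/(A - 1)`; the tail bound is then Chernoff's inequality.
-/

open MeasureTheory ProbabilityTheory Real

lemma one_sub_exp_neg_mul_nonneg {θ s : ℝ} (hθ : 0 ≤ θ) (hs : 0 ≤ s) :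
    0 ≤ 1 - exp (-θ * s) :=
  sub_nonneg.2 (exp_le_one_iff.2 (by nlinarith))

lemma exp_sub_one_mul_one_sub_exp_neg_le {θ v s : ℝ} (hθ : 0 ≤ θ) (hv : 0 ≤ v) (hs : 0 ≤ s) :
    (exp (θ * v) - 1) * (1 - exp (-θ * s)) ≤ exp (θ * v) - exp (θ * max (v - s) 0) := by
  have hq := one_sub_exp_neg_mul_nonneg hθ hs
  rcases le_total s v with hsv | hvs
  · have hsplit : exp (θ * max (v - s) 0) = exp (θ * v) * exp (-θ * s) := by
      rw [max_eq_left (sub_nonneg.2 hsv), ← exp_add]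
      ring_nf
    rw [hsplit]
    linarith
  · rw [max_eq_right (sub_nonpos.2 hvs), mul_zero, exp_zero]
    exact mul_le_of_le_one_right (sub_nonneg.2 (one_le_exp (by positivity)))
      (sub_le_self _ (exp_pos _).le)

lemma integral_exp_sub_one_mul_one_sub_integral_exp_neg_le
    {Ω : Type*} [MeasurableSpace Ω] {μ : Measure Ω} [IsProbabilityMeasure μ]
    {θ : ℝ} {V S : Ω → ℝ} (hθ : 0 ≤ θ) (hV : AEMeasurable V μ) (hS : AEMeasurable S μ)
    (hV_nonneg : ∀ ω, 0 ≤ V ω) (hS_nonneg : ∀ ω, 0 ≤ S ω) (hVS : IndepFun V S μ)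
    (hexp : Integrable (fun ω => exp (θ * V ω)) μ) :
    ((∫ ω, exp (θ * V ω) ∂μ) - 1) * (1 - ∫ ω, exp (-θ * S ω) ∂μ)
      ≤ (∫ ω, exp (θ * V ω) ∂μ) - ∫ ω, exp (θ * max (V ω - S ω) 0) ∂μ := by
  have hexp_neg : Integrable (fun ω => exp (-θ * S ω)) μ := by
    refine .of_bound (by fun_prop) 1 (ae_of_all _ fun ω => ?_)
    rw [norm_of_nonneg (exp_pos _).le]
    linarith [one_sub_exp_neg_mul_nonneg hθ (hS_nonneg ω)]
  have hexp_max : Integrable (fun ω => exp (θ * max (V ω - S ω) 0)) μ := by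
    refine hexp.mono' (by fun_prop) (ae_of_all _ fun ω => ?_)
    rw [norm_of_nonneg (exp_pos _).le, exp_le_exp]
    exact mul_le_mul_of_nonneg_left
      (max_le (by linarith [hS_nonneg ω]) (hV_nonneg ω)) hθ
  have hprod : ∫ ω, (exp (θ * V ω) - 1) * (1 - exp (-θ * S ω)) ∂μ
      = ((∫ ω, exp (θ * V ω) ∂μ) - 1) * (1 - ∫ ω, exp (-θ * S ω) ∂μ) := by
    rw [hVS.integral_fun_comp_mul_comp (f := fun v => exp (θ * v) - 1)
        (g := fun s => 1 - exp (-θ * s)) hV hS (by fun_prop) (by fun_prop),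
      integral_sub hexp (integrable_const 1), integral_sub (integrable_const 1) hexp_neg]
    simp
  rw [← hprod, ← integral_sub hexp hexp_max]
  refine integral_mono_of_nonneg (ae_of_all _ fun ω => ?_) (hexp.sub hexp_max)
    (ae_of_all _ fun ω => exp_sub_one_mul_one_sub_exp_neg_le hθ (hV_nonneg ω) (hS_nonneg ω))
  exact mul_nonneg (sub_nonneg.2 (one_le_exp (mul_nonneg hθ (hV_nonneg ω))))
    (one_sub_exp_neg_mul_nonneg hθ (hS_nonneg ω))

theorem stmt6_general
    {Ω : Type*} [MeasurableSpace Ω] (μ : Measure Ω) [IsProbabilityMeasure μ]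
    (n : ℕ) (hn : 2 ≤ n)
    (lam θ : ℝ) (hlam : 0 < lam) (hθ : 0 < θ)
    (V S : Ω → ℝ) (hV_meas : Measurable V) (hS_meas : Measurable S)
    (hV_nonneg : ∀ ω, 0 ≤ V ω) (hS_nonneg : ∀ ω, 0 ≤ S ω)
    (hindep : IndepFun V S μ)
    (hES_pos : 0 < ∫ ω, S ω ∂μ)
    (hexp : Integrable (fun ω => Real.exp (θ * V ω)) μ)
    (ρ Se : ℝ)
    (hρ : ρ = lam * ∫ ω, S ω ∂μ)
    (hSe : Se = (1 - ∫ ω, Real.exp (-θ * S ω) ∂μ) / (θ * ∫ ω, S ω ∂μ))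
    (hRCL : 0 ≤ (θ / n) * (∫ ω, Real.exp (θ * V ω) ∂μ)
        + lam * ((∫ ω, Real.exp (θ * max (V ω - S ω) 0) ∂μ)
          - ∫ ω, Real.exp (θ * V ω) ∂μ))
    (hdrift : 1 / (n : ℝ) < ρ * Se) :
    (∫ ω, Real.exp (θ * V ω) ∂μ ≤ (n : ℝ) * ρ * Se / ((n : ℝ) * ρ * Se - 1))
      ∧ ∀ x : ℝ, 0 ≤ x →
        (μ {ω | x ≤ V ω}).toReal ≤
          ((n : ℝ) * ρ * Se / ((n : ℝ) * ρ * Se - 1)) * Real.exp (-θ * x) := by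
  set M := ∫ ω, exp (θ * V ω) ∂μ
  set q := 1 - ∫ ω, exp (-θ * S ω) ∂μ
  have hn0 : (0 : ℝ) < n := Nat.cast_pos.2 (by omega)
  have hA : 1 < n * ρ * Se := by
    rw [mul_assoc]
    exact (div_lt_iff₀' hn0).1 hdrift
  have hkey := integral_exp_sub_one_mul_one_sub_integral_exp_neg_le hθ.le hV_meas.aemeasurable
    hS_meas.aemeasurable hV_nonneg hS_nonneg hindep hexp
  have hloss : lam * q * (M - 1) ≤ θ / n * M := by
    linarith [mul_le_mul_of_nonneg_left hkey hlam.le]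
  have hgrowth : n * ρ * Se * (M - 1) ≤ M := by
    have hρSe : n * ρ * Se = n / θ * (lam * q) := by
      rw [hρ, hSe]
      field_simp
    calc n * ρ * Se * (M - 1) = n / θ * (lam * q * (M - 1)) := by rw [hρSe]; ring
      _ ≤ n / θ * (θ / n * M) := by gcongr
      _ = M := by field_simp
  have hM : M ≤ n * ρ * Se / (n * ρ * Se - 1) := by
    rw [le_div_iff₀ (by linarith)]
    linarith
  refine ⟨hM, fun x _ => ?_⟩
  calc (μ {ω | x ≤ V ω}).toReal ≤ exp (-θ * x) * mgf V μ θ :=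
        measure_ge_le_exp_mul_mgf x hθ.le hexp
    _ ≤ _ := by
      rw [mul_comm]
      exact mul_le_mul_of_nonneg_right hM (exp_pos _).le

/-- Abstract form of Lemma 5.2 (state-space collapse of the short server under CARD):
a rate-conservation inequality for `e^{θV}` yields a bound on `E[e^{θV}]` and hence a
Chernoff-type tail bound `P(V ≥ x) ≤ (nρS̃ₑ(θ)/(nρS̃ₑ(θ)−1))·e^{−θx}`. -/
theorem stmt6
    {Ω : Type*} [MeasurableSpace Ω] (μ : Measure Ω) [IsProbabilityMeasure μ]
    (n : ℕ) (hn : 2 ≤ n)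
    (lam θ : ℝ) (hlam : 0 < lam) (hθ : 0 < θ)
    (V S : Ω → ℝ) (hV_meas : Measurable V) (hS_meas : Measurable S)
    (hV_nonneg : ∀ ω, 0 ≤ V ω) (hS_nonneg : ∀ ω, 0 ≤ S ω)
    (hindep : IndepFun V S μ)
    (hS_int : Integrable S μ) (hES_pos : 0 < ∫ ω, S ω ∂μ)
    (hexp : Integrable (fun ω => Real.exp (θ * V ω)) μ)
    (ρ Se : ℝ)
    (hρ : ρ = lam * ∫ ω, S ω ∂μ)
    (hSe : Se = (1 - ∫ ω, Real.exp (-θ * S ω) ∂μ) / (θ * ∫ ω, S ω ∂μ))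
    (hRCL : 0 ≤ (θ / n) * (∫ ω, Real.exp (θ * V ω) ∂μ)
        + lam * ((∫ ω, Real.exp (θ * max (V ω - S ω) 0) ∂μ)
          - ∫ ω, Real.exp (θ * V ω) ∂μ))
    (hdrift : 1 / (n : ℝ) < ρ * Se) :
    (∫ ω, Real.exp (θ * V ω) ∂μ ≤ (n : ℝ) * ρ * Se / ((n : ℝ) * ρ * Se - 1))
      ∧ ∀ x : ℝ, 0 ≤ x →
        (μ {ω | x ≤ V ω}).toReal ≤
          ((n : ℝ) * ρ * Se / ((n : ℝ) * ρ * Se - 1)) * Real.exp (-θ * x) :=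
  stmt6_general μ n hn lam θ hlam hθ V S hV_meas hS_meas hV_nonneg hS_nonneg hindep hES_pos hexp ρ
    Se hρ hSe hRCL hdrift
end

section
/- Let n ≥ 2 be an integer, m₊ > 0, and 0 < β < 1/(n(n−1)). Set θ = β/(n(n−1)·m₊). Let V and S be independent nonnegative random variables with E[S] > 0, S ≤ m₊ almost surely, and E[e^{θV}] < ∞, and let λ > 0 satisfy λ·E[S] = (n−1)/n + (n−1)·β. Suppose (θ/n)·E[e^{θV}] + λ·(E[e^{θ·(V−S)⁺}] − E[e^{θV}]) ≥ 0. Then for every x ≥ 0, P(V ≥ x) ≤ ((n+1)/(n·β))·exp(−β·x/(n(n−1)·m₊)). -/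
/-!
By the Chernoff bound `P(V ≥ x) ≤ e^{-θx} Ψ` with `Ψ = E[e^{θV}]`, it suffices to show
`Ψ ≤ (n+1)/(nβ)`. Pointwise `e^{θ(v-s)⁺} ≤ e^{θ(v-s)} + θs`, so by independence the jump term
satisfies `E[e^{θ(V-S)⁺}] ≤ Ψ E[e^{-θS}] + θE[S]`, and `e^{-t} ≤ 1 - t + t²/2` together with
`S ≤ m₊` gives `E[e^{-θS}] ≤ 1 - θ(1 - θm₊/2)E[S]`. Dividing the rate-conservation inequality by
`θ` then yields `Ψ (ρ(1 - θm₊/2) - 1/n) ≤ ρ` for the load `ρ = λE[S]`, and for the given `ρ` and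
`θm₊ = β/(n(n-1))` the drift margin `ρ(1 - θm₊/2) - 1/n` is at least `ρnβ/(n+1)`.
-/

open MeasureTheory ProbabilityTheory Real

lemma exp_neg_le_one_sub_add_sq_div_two {t : ℝ} (ht : 0 ≤ t) : exp (-t) ≤ 1 - t + t ^ 2 / 2 := by
  have hquad := quadratic_le_exp_of_nonneg ht
  rw [exp_neg, inv_le_iff_one_le_mul₀ (exp_pos t)]
  nlinarith [sq_nonneg (t ^ 2), sq_nonneg (t - 1)]

lemma exp_neg_mul_le_of_mem_Icc {θ m s : ℝ} (hθ : 0 ≤ θ) (hs : s ∈ Set.Icc 0 m) :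
    exp (-θ * s) ≤ 1 - θ * (1 - θ * m / 2) * s := by
  have hsq : (θ * s) ^ 2 ≤ θ ^ 2 * m * s := by
    nlinarith [mul_nonneg (mul_nonneg (sq_nonneg θ) hs.1) (sub_nonneg.2 hs.2)]
  calc exp (-θ * s) = exp (-(θ * s)) := by rw [neg_mul]
    _ ≤ 1 - θ * s + (θ * s) ^ 2 / 2 := exp_neg_le_one_sub_add_sq_div_two (mul_nonneg hθ hs.1)
    _ ≤ 1 - θ * (1 - θ * m / 2) * s := by linarith

lemma exp_mul_max_sub_le {θ v s : ℝ} (hθ : 0 ≤ θ) (hv : 0 ≤ v) (hs : 0 ≤ s) :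
    exp (θ * max (v - s) 0) ≤ exp (θ * (v - s)) + θ * s := by
  rcases le_total s v with hsv | hvs
  · rw [max_eq_left (sub_nonneg.2 hsv)]
    linarith [mul_nonneg hθ hs]
  · rw [max_eq_right (sub_nonpos.2 hvs), mul_zero, exp_zero]
    linarith [add_one_le_exp (θ * (v - s)), mul_nonneg hθ hv]

section

variable {Ω : Type*} [MeasurableSpace Ω] {μ : Measure Ω} [IsProbabilityMeasure μ]
  {V S : Ω → ℝ} {θ m : ℝ}

lemma mgf_neg_le_of_mem_Icc (hθ : 0 ≤ θ) (hS : AEMeasurable S μ)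
    (hSm : ∀ᵐ ω ∂μ, S ω ∈ Set.Icc 0 m) :
    mgf S μ (-θ) ≤ 1 - θ * (1 - θ * m / 2) * μ[S] := by
  have hSint : Integrable S μ := .of_mem_Icc 0 m hS hSm
  calc mgf S μ (-θ) ≤ ∫ ω, (1 - θ * (1 - θ * m / 2) * S ω) ∂μ := by
        refine integral_mono_ae (integrable_exp_mul_of_mem_Icc hS hSm)
          ((integrable_const 1).sub (hSint.const_mul _)) ?_
        filter_upwards [hSm] with ω hω using exp_neg_mul_le_of_mem_Icc hθ hω
    _ = 1 - θ * (1 - θ * m / 2) * μ[S] := by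
        rw [integral_sub (integrable_const 1) (hSint.const_mul _), integral_const_mul,
          integral_const, probReal_univ, one_smul]

lemma integral_exp_mul_max_sub_le (hθ : 0 ≤ θ) (hS : AEMeasurable S μ)
    (hV0 : ∀ ω, 0 ≤ V ω) (hS0 : ∀ ω, 0 ≤ S ω) (hSm : ∀ᵐ ω ∂μ, S ω ≤ m) (hVS : IndepFun V S μ)
    (hexp : Integrable (fun ω => exp (θ * V ω)) μ) :
    ∫ ω, exp (θ * max (V ω - S ω) 0) ∂μ
      ≤ mgf V μ θ * (1 - θ * (1 - θ * m / 2) * μ[S]) + θ * μ[S] := by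
  have hSIcc : ∀ᵐ ω ∂μ, S ω ∈ Set.Icc 0 m := by
    filter_upwards [hSm] with ω hω using ⟨hS0 ω, hω⟩
  have hSint : Integrable S μ := .of_mem_Icc 0 m hS hSIcc
  have hVnegS : IndepFun V (-S) μ := hVS.comp measurable_id measurable_neg
  have hexpnegS : Integrable (fun ω => exp (θ * (-S) ω)) μ :=
    integrable_exp_mul_of_le θ 0 hθ hS.neg (.of_forall fun ω => by simpa using hS0 ω)
  have hexpsub : Integrable (fun ω => exp (θ * (V ω - S ω))) μ := by
    simpa only [Pi.add_apply, Pi.neg_apply, ← sub_eq_add_neg] using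
      hVnegS.integrable_exp_mul_add hexp hexpnegS
  have hmgf : mgf (V - S) μ θ = mgf V μ θ * mgf S μ (-θ) := by
    rw [sub_eq_add_neg, hVnegS.mgf_add hexp.1 hexpnegS.1, mgf_neg]
  calc ∫ ω, exp (θ * max (V ω - S ω) 0) ∂μ ≤ ∫ ω, (exp (θ * (V ω - S ω)) + θ * S ω) ∂μ :=
        integral_mono_of_nonneg (.of_forall fun ω => (exp_pos _).le)
          (hexpsub.add (hSint.const_mul θ))
          (.of_forall fun ω => exp_mul_max_sub_le hθ (hV0 ω) (hS0 ω))
    _ = mgf V μ θ * mgf S μ (-θ) + θ * μ[S] := by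
        rw [integral_add hexpsub (hSint.const_mul θ), integral_const_mul, ← hmgf]; rfl
    _ ≤ mgf V μ θ * (1 - θ * (1 - θ * m / 2) * μ[S]) + θ * μ[S] := by
        gcongr
        · exact mgf_nonneg
        · exact mgf_neg_le_of_mem_Icc hθ hS hSIcc

end

lemma mul_sub_le_of_rate_conservation {Ψ Φ θ q e κ lam : ℝ} (hθ : 0 < θ) (hlam : 0 < lam)
    (hΦ : Φ ≤ Ψ * (1 - θ * q * e) + θ * e) (hrate : 0 ≤ θ * κ * Ψ + lam * (Φ - Ψ)) :
    Ψ * (lam * e * q - κ) ≤ lam * e := by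
  have hscaled : 0 ≤ θ * (lam * e - Ψ * (lam * e * q - κ)) := by
    nlinarith [mul_le_mul_of_nonneg_left hΦ hlam.le]
  linarith [nonneg_of_mul_nonneg_right hscaled hθ]

-- `N` times the drift margin in `le_succ_div_of_mul_drift_le`, written in the variable `u = Nβ`.
lemma succ_le_one_add_mul_sub {N u : ℝ} (hN : 2 ≤ N) (hu : 0 < u) (huN : u * (N - 1) < 1) :
    N + 1 ≤ (1 + u) * (N ^ 2 - 1 - (N - 1) * u - (N + 1) * u / (2 * N ^ 2)) := by
  have hu1 : u < 1 := by nlinarith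
  have hfrac : (N + 1) / (2 * N ^ 2) ≤ 3 / 8 := by
    rw [div_le_iff₀ (by positivity)]; nlinarith
  have hexpand : (1 + u) * (N ^ 2 - 1 - (N - 1) * u - (N + 1) * u / (2 * N ^ 2)) - (N + 1)
      = (N + 1) * (N - 2) + u * (N * (N - 1) - (N + 1) / (2 * N ^ 2))
        - u ^ 2 * (N - 1 + (N + 1) / (2 * N ^ 2)) := by ring
  have hN2 : (0 : ℝ) ≤ N - 2 := by linarith
  nlinarith [mul_nonneg (by linarith : (0 : ℝ) ≤ N + 1) hN2, mul_pos hu (sub_pos.2 huN),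
    mul_pos hu (sub_pos.2 hu1), mul_nonneg hu.le hN2]

lemma le_succ_div_of_mul_drift_le {N β Ψ : ℝ} (hN : 2 ≤ N) (hβ : 0 < β)
    (hβN : β < 1 / (N * (N - 1)))
    (h : Ψ * (((N - 1) / N + (N - 1) * β) * (1 - β / (N * (N - 1)) / 2) - 1 / N)
      ≤ (N - 1) / N + (N - 1) * β) :
    Ψ ≤ (N + 1) / (N * β) := by
  have hN0 : 0 < N := by linarith
  have hN1 : 0 < N - 1 := by linarith
  set a := (N - 1) / N + (N - 1) * β
  set c := a * (1 - β / (N * (N - 1)) / 2) - 1 / N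
  have hmargin : a * (N * β) ≤ (N + 1) * c := by
    have hu : N * β * (N - 1) < 1 := by
      rw [lt_div_iff₀ (by positivity)] at hβN; linarith
    have hscaled : N * ((N + 1) * c - a * (N * β))
        = (1 + N * β) * (N ^ 2 - 1 - (N - 1) * (N * β) - (N + 1) * (N * β) / (2 * N ^ 2))
          - (N + 1) := by
      simp only [a, c]; field_simp; ring
    have := succ_le_one_add_mul_sub hN (by positivity) hu
    nlinarith
  have hc : 0 < c := by
    have : 0 < a * (N * β) := by positivity
    nlinarith
  rw [le_div_iff₀ (by positivity)]
  refine le_of_mul_le_mul_right ?_ hc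
  nlinarith [mul_le_mul_of_nonneg_right h (by positivity : (0:ℝ) ≤ N * β)]

theorem stmt8_general
    {Ω : Type*} [MeasurableSpace Ω] (μ : Measure Ω) [IsProbabilityMeasure μ]
    (n : ℕ) (hn : 2 ≤ n)
    (mp β : ℝ) (hmp : 0 < mp) (hβ0 : 0 < β)
    (hβ1 : β < 1 / ((n : ℝ) * ((n : ℝ) - 1)))
    (θ : ℝ) (hθ : θ = β / ((n : ℝ) * ((n : ℝ) - 1) * mp))
    (V S : Ω → ℝ) (hS_meas : Measurable S)
    (hV_nonneg : ∀ ω, 0 ≤ V ω) (hS_nonneg : ∀ ω, 0 ≤ S ω)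
    (hindep : IndepFun V S μ)
    (hS_bdd : ∀ᵐ ω ∂μ, S ω ≤ mp)
    (hexp : Integrable (fun ω => Real.exp (θ * V ω)) μ)
    (lam : ℝ) (hlam : 0 < lam)
    (hload : lam * ∫ ω, S ω ∂μ = ((n : ℝ) - 1) / n + ((n : ℝ) - 1) * β)
    (hRCL : 0 ≤ (θ / n) * (∫ ω, Real.exp (θ * V ω) ∂μ)
        + lam * ((∫ ω, Real.exp (θ * max (V ω - S ω) 0) ∂μ)
          - ∫ ω, Real.exp (θ * V ω) ∂μ)) :
    ∀ x : ℝ, 0 ≤ x →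
      (μ {ω | x ≤ V ω}).toReal ≤
        (((n : ℝ) + 1) / ((n : ℝ) * β))
          * Real.exp (-(β * x) / ((n : ℝ) * ((n : ℝ) - 1) * mp)) := by
  intro x _
  have hN : (2 : ℝ) ≤ n := by exact_mod_cast hn
  have hθ0 : 0 < θ := by
    rw [hθ]
    have : (0 : ℝ) < n - 1 := by linarith
    positivity
  have hθmp : θ * mp = β / (n * (n - 1)) := by rw [hθ]; field_simp
  have hdrift := mul_sub_le_of_rate_conservation hθ0 hlam
    (integral_exp_mul_max_sub_le hθ0.le hS_meas.aemeasurable hV_nonneg hS_nonneg hS_bdd hindep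
      hexp)
    (by rwa [div_eq_mul_one_div] at hRCL)
  rw [hload, hθmp] at hdrift
  calc μ.real {ω | x ≤ V ω} ≤ exp (-θ * x) * mgf V μ θ :=
        measure_ge_le_exp_mul_mgf x hθ0.le hexp
    _ ≤ exp (-θ * x) * ((n + 1) / (n * β)) := by
        gcongr; exact le_succ_div_of_mul_drift_le hN hβ0 hβ1 hdrift
    _ = ((n + 1) / (n * β)) * exp (-(β * x) / (n * (n - 1) * mp)) := by
        rw [mul_comm, hθ]; congr 2; ring

/-- Abstract form of Lemma 5.3 (idleness bound of a short server under CARD): with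
`θ = β/(n(n−1)m₊)`, job sizes bounded by `m₊`, load `λE[S] = (n−1)/n + (n−1)β`, and the
rate-conservation inequality, one gets
`P(V ≥ x) ≤ ((n+1)/(nβ))·exp(−βx/(n(n−1)m₊))` for all `x ≥ 0`. -/
theorem stmt8
    {Ω : Type*} [MeasurableSpace Ω] (μ : Measure Ω) [IsProbabilityMeasure μ]
    (n : ℕ) (hn : 2 ≤ n)
    (mp β : ℝ) (hmp : 0 < mp) (hβ0 : 0 < β)
    (hβ1 : β < 1 / ((n : ℝ) * ((n : ℝ) - 1)))
    (θ : ℝ) (hθ : θ = β / ((n : ℝ) * ((n : ℝ) - 1) * mp))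
    (V S : Ω → ℝ) (hV_meas : Measurable V) (hS_meas : Measurable S)
    (hV_nonneg : ∀ ω, 0 ≤ V ω) (hS_nonneg : ∀ ω, 0 ≤ S ω)
    (hindep : IndepFun V S μ)
    (hS_int : Integrable S μ) (hES_pos : 0 < ∫ ω, S ω ∂μ)
    (hS_bdd : ∀ᵐ ω ∂μ, S ω ≤ mp)
    (hexp : Integrable (fun ω => Real.exp (θ * V ω)) μ)
    (lam : ℝ) (hlam : 0 < lam)
    (hload : lam * ∫ ω, S ω ∂μ = ((n : ℝ) - 1) / n + ((n : ℝ) - 1) * β)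
    (hRCL : 0 ≤ (θ / n) * (∫ ω, Real.exp (θ * V ω) ∂μ)
        + lam * ((∫ ω, Real.exp (θ * max (V ω - S ω) 0) ∂μ)
          - ∫ ω, Real.exp (θ * V ω) ∂μ)) :
    ∀ x : ℝ, 0 ≤ x →
      (μ {ω | x ≤ V ω}).toReal ≤
        (((n : ℝ) + 1) / ((n : ℝ) * β))
          * Real.exp (-(β * x) / ((n : ℝ) * ((n : ℝ) - 1) * mp)) :=
  stmt8_general μ n hn mp β hmp hβ0 hβ1 θ hθ V S hS_meas hV_nonneg hS_nonneg hindep hS_bdd hexp lam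
    hlam hload hRCL
end

section
/- Let n ≥ 2 be an integer and let ρ_s, ρ_m, δ, P, q_A, q_B be real numbers with ρ_s, ρ_m, δ ≥ 0, q_A ≥ 0, q_B ≥ 0, q_A + q_B = 1, 1 − δ ≤ P ≤ 1, and ρ_s + ρ_m·q_B = (n−1)·P/n. Define α = 1/n − ρ_s/(n−1) and β = (ρ_s + ρ_m)/(n−1) − 1/n, and assume α > 0, β > 0, and β ≥ 2δ. Then q_A ≤ 2β/(α + β) and q_B ≤ α/(α + β). -/
/-!
Dividing the work balance identity by `n - 1` turns it into `(α + β) q_B = α - (1 - P) / n`,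
since `α + β = ρ_m / (n - 1)`. The slack `(1 - P) / n` lies in `[0, δ]`, so `q_B ≤ α / (α + β)`,
and with `q_A = 1 - q_B` and `δ ≤ β / 2` also `(α + β) q_A = β + (1 - P) / n ≤ 2β`.
-/

lemma add_mul_eq_sub_of_balance {N ρs ρm P qB α β : ℝ} (hN : N ≠ 0) (hN1 : N - 1 ≠ 0)
    (hbal : ρs + ρm * qB = (N - 1) * P / N)
    (hα : α = 1 / N - ρs / (N - 1)) (hβ : β = (ρs + ρm) / (N - 1) - 1 / N) :
    (α + β) * qB = α - (1 - P) / N := by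
  subst hα hβ
  field_simp at hbal ⊢
  linear_combination hbal

lemma le_div_of_add_mul_eq_sub {α β e qB : ℝ} (hαβ : 0 < α + β)
    (hkey : (α + β) * qB = α - e) (he : 0 ≤ e) :
    qB ≤ α / (α + β) := by
  rw [le_div_iff₀ hαβ]
  linarith

lemma le_two_mul_div_of_add_mul_eq_sub {α β e qA qB : ℝ} (hαβ : 0 < α + β)
    (hsum : qA + qB = 1) (hkey : (α + β) * qB = α - e) (he : e ≤ β) :
    qA ≤ 2 * β / (α + β) := by
  rw [le_div_iff₀ hαβ, eq_sub_of_add_eq hsum]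
  linarith

theorem stmt9_general (n : ℕ) (hn : 2 ≤ n)
    (ρs ρm δ P qA qB : ℝ)
    (hsum : qA + qB = 1)
    (hP1 : 1 - δ ≤ P) (hP2 : P ≤ 1)
    (hbal : ρs + ρm * qB = ((n : ℝ) - 1) * P / n)
    (α β : ℝ)
    (hα : α = 1 / (n : ℝ) - ρs / ((n : ℝ) - 1))
    (hβ : β = (ρs + ρm) / ((n : ℝ) - 1) - 1 / (n : ℝ))
    (hαpos : 0 < α) (hβpos : 0 < β) (hβδ : 2 * δ ≤ β) :
    qA ≤ 2 * β / (α + β) ∧ qB ≤ α / (α + β) := by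
  have hN : (1 : ℝ) < n := by exact_mod_cast hn
  have hkey := add_mul_eq_sub_of_balance (by positivity) (by linarith) hbal hα hβ
  have hslack_nonneg : 0 ≤ (1 - P) / n := div_nonneg (by linarith) (by positivity)
  have hslack_le : (1 - P) / n ≤ 1 - P := div_le_self (by linarith) hN.le
  exact ⟨le_two_mul_div_of_add_mul_eq_sub (by linarith) hsum hkey (by linarith),
    le_div_of_add_mul_eq_sub (by linarith) hkey hslack_nonneg⟩

/-- Lemma 6.8 of the paper (general `n`): bounds on the stationary probabilities `q_A`, `q_B`
that a short server's work is above or below the CARD threshold, given the work balance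
identity `ρ_s + ρ_m q_B = (n−1)P/n` with `P ∈ [1−δ, 1]` and `β ≥ 2δ`. -/
theorem stmt9 (n : ℕ) (hn : 2 ≤ n)
    (ρs ρm δ P qA qB : ℝ)
    (hρs : 0 ≤ ρs) (hρm : 0 ≤ ρm) (hδ : 0 ≤ δ)
    (hqA : 0 ≤ qA) (hqB : 0 ≤ qB) (hsum : qA + qB = 1)
    (hP1 : 1 - δ ≤ P) (hP2 : P ≤ 1)
    (hbal : ρs + ρm * qB = ((n : ℝ) - 1) * P / n)
    (α β : ℝ)
    (hα : α = 1 / (n : ℝ) - ρs / ((n : ℝ) - 1))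
    (hβ : β = (ρs + ρm) / ((n : ℝ) - 1) - 1 / (n : ℝ))
    (hαpos : 0 < α) (hβpos : 0 < β) (hβδ : 2 * δ ≤ β) :
    qA ≤ 2 * β / (α + β) ∧ qB ≤ α / (α + β) :=
  stmt9_general n hn ρs ρm δ P qA qB hsum hP1 hP2 hbal α β hα hβ hαpos hβpos hβδ
end

section
/- Fix α with 0 < α ≤ 1/2. For ε ∈ (0, 1), set β(ε) = ε^{1/3}·(log(1/ε))^{2/3}, δ(ε) = ε³, and L(ε) = log(3/(2·β(ε)·δ(ε))). Then, as ε → 0 from the right, each of the five functions β(ε)/(α²·(α + β(ε))), √(β(ε)/(α²·ε·(α + β(ε)))), L(ε)/(β(ε)·(α + β(ε))), √(L(ε)/β(ε)), and (√(δ(ε))/(α²·β(ε)²·ε))·L(ε) is O(ε^{−1/3}·(log(1/ε))^{1/3}). -/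
open Asymptotics

private lemma perEps (α ε : ℝ) (hα0 : 0 < α) (hα : α ≤ 1 / 2)
    (h0 : 0 < ε) (h1 : ε < Real.exp (-1)) :
    ∀ l b d Lv G : ℝ, l = Real.log (1 / ε) →
    b = ε ^ ((1:ℝ)/3) * l ^ ((2:ℝ)/3) → d = ε ^ 3 →
    Lv = Real.log (3 / (2 * b * d)) → G = ε ^ (-(1:ℝ)/3) * l ^ ((1:ℝ)/3) →
    (0 ≤ G ∧
      b / (α ^ 2 * (α + b)) ≤ 1 / α ^ 3 * G ∧
      Real.sqrt (b / (α ^ 2 * ε * (α + b))) ≤ 1 / α ^ 2 * G ∧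
      Lv / (b * (α + b)) ≤ 5 / α * G ∧
      Real.sqrt (Lv / b) ≤ 3 * G ∧
      Real.sqrt d / (α ^ 2 * b ^ 2 * ε) * Lv ≤ 5 / α ^ 2 * G) ∧
    (0 ≤ b / (α ^ 2 * (α + b)) ∧ 0 ≤ Lv / (b * (α + b)) ∧
      0 ≤ Real.sqrt d / (α ^ 2 * b ^ 2 * ε) * Lv) := by
  intro l b d Lv G hl hb hd hLv hG
  have hε1 : ε < 1 := h1.trans_le (by
    rw [show (1:ℝ) = Real.exp 0 by simp]
    exact Real.exp_le_exp.2 (by norm_num))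
  have hl1 : 1 ≤ l := by
    rw [hl, one_div, Real.log_inv]
    have := Real.log_lt_log h0 h1
    rw [Real.log_exp] at this; linarith
  have hl0 : 0 < l := by linarith
  have hlle : l ≤ 1 / ε := by
    rw [hl]
    have := Real.log_le_sub_one_of_pos (show (0:ℝ) < 1/ε by positivity)
    linarith
  have hbpos : 0 < b := by rw [hb]; positivity
  have hGpos : 0 < G := by rw [hG]; positivity
  have hεneg1 : 1 ≤ ε ^ (-(1:ℝ)/3) :=
    Real.one_le_rpow_of_pos_of_le_one_of_nonpos h0 hε1.le (by norm_num)
  have hG1 : 1 ≤ G := by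
    rw [hG]
    have h2' : 1 ≤ l ^ ((1:ℝ)/3) := Real.one_le_rpow hl1 (by norm_num)
    calc (1:ℝ) = 1 * 1 := by ring
      _ ≤ ε ^ (-(1:ℝ)/3) * l ^ ((1:ℝ)/3) :=
          mul_le_mul hεneg1 h2' zero_le_one (zero_le_one.trans hεneg1)
  have hεadd : ∀ a c : ℝ, ε ^ a * ε ^ c = ε ^ (a + c) := fun a c => (Real.rpow_add h0 a c).symm
  have hladd : ∀ a c : ℝ, l ^ a * l ^ c = l ^ (a + c) := fun a c => (Real.rpow_add hl0 a c).symm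
  -- l = G * b
  have hlGb : l = G * b := by
    rw [hG, hb]
    calc l = ε ^ (-(1:ℝ)/3 + (1:ℝ)/3) * l ^ ((1:ℝ)/3 + (2:ℝ)/3) := by
          norm_num [Real.rpow_zero, Real.rpow_one]
        _ = (ε ^ (-(1:ℝ)/3) * ε ^ ((1:ℝ)/3)) * (l ^ ((1:ℝ)/3) * l ^ ((2:ℝ)/3)) := by
          rw [hεadd, hladd]
        _ = ε ^ (-(1:ℝ)/3) * l ^ ((1:ℝ)/3) * (ε ^ ((1:ℝ)/3) * l ^ ((2:ℝ)/3)) := by ring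
  -- b = G^2 * ε
  have hbG2 : b = G ^ 2 * ε := by
    rw [hG, hb, sq]
    calc ε ^ ((1:ℝ)/3) * l ^ ((2:ℝ)/3)
        = ε ^ (-(1:ℝ)/3 + -(1:ℝ)/3 + 1) * l ^ ((1:ℝ)/3 + (1:ℝ)/3) := by
          norm_num
        _ = ((ε ^ (-(1:ℝ)/3) * ε ^ (-(1:ℝ)/3)) * ε ^ (1:ℝ)) * (l ^ ((1:ℝ)/3) * l ^ ((1:ℝ)/3)) := by
          rw [hεadd, hεadd, hladd]
        _ = ε ^ (-(1:ℝ)/3) * l ^ ((1:ℝ)/3) * (ε ^ (-(1:ℝ)/3) * l ^ ((1:ℝ)/3)) * ε := by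
          rw [Real.rpow_one]; ring
  -- b ≤ G
  have hbleG : b ≤ G := by
    have hlpow : l ^ ((1:ℝ)/3) ≤ ε ^ (-(1:ℝ)/3) := by
      have h' : l ^ ((1:ℝ)/3) ≤ (ε⁻¹) ^ ((1:ℝ)/3) := by
        apply Real.rpow_le_rpow hl0.le _ (by norm_num)
        rwa [← one_div]
      rwa [Real.inv_rpow h0.le, ← Real.rpow_neg h0.le, neg_div'] at h'
    have hε3 : 0 ≤ ε ^ ((1:ℝ)/3) := Real.rpow_nonneg h0.le _
    have hl3 : 0 ≤ l ^ ((1:ℝ)/3) := Real.rpow_nonneg hl0.le _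
    calc b = ε ^ ((1:ℝ)/3) * (l ^ ((1:ℝ)/3) * l ^ ((1:ℝ)/3)) := by
          rw [hb, hladd]; norm_num
        _ ≤ ε ^ ((1:ℝ)/3) * (ε ^ (-(1:ℝ)/3) * l ^ ((1:ℝ)/3)) :=
          mul_le_mul_of_nonneg_left (mul_le_mul_of_nonneg_right hlpow hl3) hε3
        _ = (ε ^ ((1:ℝ)/3) * ε ^ (-(1:ℝ)/3)) * l ^ ((1:ℝ)/3) := by ring
        _ = 1 * l ^ ((1:ℝ)/3) := by rw [hεadd]; norm_num
        _ ≤ ε ^ (-(1:ℝ)/3) * l ^ ((1:ℝ)/3) := mul_le_mul_of_nonneg_right hεneg1 hl3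
        _ = G := hG.symm
  -- Lv bounds
  have hlogε : Real.log ε = -l := by rw [hl, one_div, Real.log_inv]; ring
  have hlogl0 : 0 ≤ Real.log l := Real.log_nonneg hl1
  have hlogll : Real.log l ≤ l := (Real.log_le_sub_one_of_pos hl0).trans (by linarith)
  have hdpos : 0 < d := by rw [hd]; positivity
  have hLveq : Lv = Real.log 3 - Real.log 2 + (10/3) * l - (2/3) * Real.log l := by
    rw [hLv, Real.log_div (by norm_num) (by positivity),
      Real.log_mul (by positivity) hdpos.ne', Real.log_mul (by norm_num) hbpos.ne',
      hb, Real.log_mul (by positivity) (by positivity), Real.log_rpow h0, Real.log_rpow hl0,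
      hd, Real.log_pow, hlogε]
    push_cast; ring
  have hlog32 : Real.log 3 - Real.log 2 ≤ 1 := by
    have h32 : Real.log 3 - Real.log 2 = Real.log (3/2) := by
      rw [Real.log_div (by norm_num) (by norm_num)]
    rw [h32]
    have := Real.log_le_sub_one_of_pos (show (0:ℝ) < 3/2 by norm_num)
    linarith
  have hlog32' : 0 ≤ Real.log 3 - Real.log 2 := by
    have := Real.log_le_log (by norm_num : (0:ℝ) < 2) (by norm_num : (2:ℝ) ≤ 3)
    linarith
  have hLv0 : 0 ≤ Lv := by rw [hLveq]; linarith
  have hLv5 : Lv ≤ 5 * l := by rw [hLveq]; linarith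
  have hαb : 0 < α + b := by linarith
  clear hεadd hladd hLveq hlogε hlogl0 hlogll hlog32 hlog32' hLv hl hG hlle
  constructor
  · refine ⟨hGpos.le, ?_, ?_, ?_, ?_, ?_⟩
    · -- term 1
      calc b / (α ^ 2 * (α + b)) ≤ b / α ^ 3 :=
            div_le_div_of_nonneg_left hbpos.le (by positivity) (by nlinarith)
          _ ≤ G / α ^ 3 := (div_le_div_iff_of_pos_right (by positivity)).2 hbleG
          _ = 1 / α ^ 3 * G := by ring
    · -- term 2
      calc Real.sqrt (b / (α ^ 2 * ε * (α + b)))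
          ≤ Real.sqrt ((1 / α ^ 2 * G) ^ 2) := by
            apply Real.sqrt_le_sqrt
            have hd2 : α ^ 4 * ε ≤ α ^ 2 * ε * (α + b) := by
              have h4 : α ^ 4 ≤ α ^ 3 :=
                pow_le_pow_of_le_one hα0.le (by linarith) (by norm_num)
              have h5 : α ^ 3 * ε ≤ α ^ 2 * ε * (α + b) := by
                nlinarith [mul_nonneg (mul_nonneg (sq_nonneg α) h0.le) hbpos.le]
              nlinarith
            calc b / (α ^ 2 * ε * (α + b)) ≤ b / (α ^ 4 * ε) :=
                  div_le_div_of_nonneg_left hbpos.le (by positivity) hd2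
                _ = (1 / α ^ 2 * G) ^ 2 := by
                  rw [hbG2]; field_simp
          _ = 1 / α ^ 2 * G := Real.sqrt_sq (by positivity)
    · -- term 3
      calc Lv / (b * (α + b)) ≤ Lv / (α * b) :=
            div_le_div_of_nonneg_left hLv0 (by positivity)
              (by nlinarith [mul_nonneg hbpos.le hbpos.le])
          _ ≤ 5 * l / (α * b) := (div_le_div_iff_of_pos_right (by positivity)).2 hLv5
          _ = 5 / α * G := by rw [hlGb]; field_simp
    · -- term 4
      calc Real.sqrt (Lv / b) ≤ Real.sqrt ((3 * G) ^ 2) := by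
            apply Real.sqrt_le_sqrt
            calc Lv / b ≤ 5 * l / b := (div_le_div_iff_of_pos_right hbpos).2 hLv5
                _ = 5 * G := by rw [hlGb]; field_simp
                _ ≤ (3 * G) ^ 2 := by nlinarith
          _ = 3 * G := Real.sqrt_sq (by positivity)
    · -- term 5
      have hsd : Real.sqrt d = ε * Real.sqrt ε := by
        rw [hd, show ε ^ 3 = ε ^ 2 * ε by ring, Real.sqrt_mul (by positivity), Real.sqrt_sq h0.le]
      have hsε : Real.sqrt ε ≤ b := by
        have h12 : ε ^ ((1:ℝ)/2) ≤ ε ^ ((1:ℝ)/3) :=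
          Real.rpow_le_rpow_of_exponent_ge h0 hε1.le (by norm_num)
        have hl23 : 1 ≤ l ^ ((2:ℝ)/3) := Real.one_le_rpow hl1 (by norm_num)
        have hε3 : 0 ≤ ε ^ ((1:ℝ)/3) := Real.rpow_nonneg h0.le _
        rw [Real.sqrt_eq_rpow, hb]
        calc ε ^ ((1:ℝ)/2) ≤ ε ^ ((1:ℝ)/3) := h12
          _ = ε ^ ((1:ℝ)/3) * 1 := by ring
          _ ≤ ε ^ ((1:ℝ)/3) * l ^ ((2:ℝ)/3) := mul_le_mul_of_nonneg_left hl23 hε3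
      calc Real.sqrt d / (α ^ 2 * b ^ 2 * ε) * Lv
          = Real.sqrt ε * Lv / (α ^ 2 * b ^ 2) := by rw [hsd]; field_simp
          _ ≤ b * (5 * l) / (α ^ 2 * b ^ 2) := by
            apply (div_le_div_iff_of_pos_right (by positivity)).2
            exact mul_le_mul hsε hLv5 hLv0 hbpos.le
          _ = 5 / α ^ 2 * G := by rw [hlGb]; field_simp
  · refine ⟨div_nonneg hbpos.le (by positivity), div_nonneg hLv0 (by positivity), ?_⟩
    exact mul_nonneg (div_nonneg (Real.sqrt_nonneg _) (by positivity)) hLv0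

/-- Asymptotic estimates behind CARD's heavy-traffic optimality: with
`β(ε) = ε^{1/3}(log(1/ε))^{2/3}`, `δ(ε) = ε³`, `L(ε) = log(3/(2β(ε)δ(ε)))`, every error term
of the explicit response time bound is `O(ε^{−1/3}(log(1/ε))^{1/3})` as `ε → 0⁺`. -/
theorem stmt14 (α : ℝ) (hα0 : 0 < α) (hα : α ≤ 1 / 2)
    (β δ L g : ℝ → ℝ)
    (hβ : ∀ ε, β ε = ε ^ ((1 : ℝ) / 3) * (Real.log (1 / ε)) ^ ((2 : ℝ) / 3))
    (hδ : ∀ ε, δ ε = ε ^ 3)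
    (hL : ∀ ε, L ε = Real.log (3 / (2 * β ε * δ ε)))
    (hg : ∀ ε, g ε = ε ^ (-(1 : ℝ) / 3) * (Real.log (1 / ε)) ^ ((1 : ℝ) / 3)) :
    ((fun ε => β ε / (α ^ 2 * (α + β ε))) =O[nhdsWithin 0 (Set.Ioi 0)] g)
      ∧ ((fun ε => Real.sqrt (β ε / (α ^ 2 * ε * (α + β ε)))) =O[nhdsWithin 0 (Set.Ioi 0)] g)
      ∧ ((fun ε => L ε / (β ε * (α + β ε))) =O[nhdsWithin 0 (Set.Ioi 0)] g)
      ∧ ((fun ε => Real.sqrt (L ε / β ε)) =O[nhdsWithin 0 (Set.Ioi 0)] g)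
      ∧ ((fun ε => Real.sqrt (δ ε) / (α ^ 2 * (β ε) ^ 2 * ε) * L ε)
          =O[nhdsWithin 0 (Set.Ioi 0)] g) := by
  have hmem : Set.Ioo (0:ℝ) (Real.exp (-1)) ∈ nhdsWithin (0:ℝ) (Set.Ioi 0) :=
    Ioo_mem_nhdsGT_of_mem ⟨le_refl _, Real.exp_pos _⟩
  refine ⟨isBigO_iff.mpr ⟨1 / α ^ 3, ?_⟩, isBigO_iff.mpr ⟨1 / α ^ 2, ?_⟩,
    isBigO_iff.mpr ⟨5 / α, ?_⟩, isBigO_iff.mpr ⟨3, ?_⟩, isBigO_iff.mpr ⟨5 / α ^ 2, ?_⟩⟩ <;>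
  · filter_upwards [hmem] with ε hε
    obtain ⟨⟨hG0, h1', h2', h3', h4', h5'⟩, hn1, hn3, hn5⟩ :=
      perEps α ε hα0 hα hε.1 hε.2 (Real.log (1/ε)) (β ε) (δ ε) (L ε) (g ε)
        rfl (hβ ε) (hδ ε) (hL ε) (hg ε)
    rw [Real.norm_eq_abs, Real.norm_eq_abs, abs_of_nonneg hG0]
    first
      | (rw [abs_of_nonneg hn1]; exact h1')
      | (rw [abs_of_nonneg (Real.sqrt_nonneg _)]; exact h2')
      | (rw [abs_of_nonneg hn3]; exact h3')
      | (rw [abs_of_nonneg (Real.sqrt_nonneg _)]; exact h4')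
      | (rw [abs_of_nonneg hn5]; exact h5')
end
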